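/- arXiv:2303.04386 — 5 statements merged into one kernel-verified Lean document; each statement's English description precedes it below -/
import Mathlib

section
/- For any probability vectors $x, y$ in the relative interior of the simplex $\Delta_n$ and any nonnegative vector $g \in \mathbb{R}^n_+$, one has $\langle g, x - y\rangle - \sum_{i=1}^n y_i \log(y_i/x_i) \le \sum_{i=1}^n x_i g_i^2 / 2$. -/
/-!
Write `Z = ∑ xᵢ e^{-gᵢ}`. Jensen's inequality for the concave logarithm, applied to the
points `xᵢ e^{-gᵢ} / yᵢ` with weights `yᵢ`, is the Gibbs variational inequality
`-⟨g, y⟩ - KL(y‖x) ≤ log Z`. Then `log Z ≤ Z - 1`, and `e^{-t} ≤ 1 - t + t²/2` for `t ≥ 0`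
bounds `Z - 1` by `-⟨g, x⟩ + ∑ xᵢ gᵢ² / 2`.
-/

open Finset Real

theorem Real.exp_neg_le_one_sub_add_sq_div_two {t : ℝ} (ht : 0 ≤ t) :
    exp (-t) ≤ 1 - t + t ^ 2 / 2 := by
  have hpos : 0 < 1 + t + t ^ 2 / 2 := by positivity
  -- `(1 + t + t²/2)(1 - t + t²/2) = 1 + t⁴/4`
  have hprod : 1 ≤ (1 + t + t ^ 2 / 2) * (1 - t + t ^ 2 / 2) := by
    nlinarith [pow_two_nonneg (t ^ 2)]
  calc exp (-t) = (exp t)⁻¹ := exp_neg t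
    _ ≤ (1 + t + t ^ 2 / 2)⁻¹ := inv_anti₀ hpos (quadratic_le_exp_of_nonneg ht)
    _ ≤ 1 - t + t ^ 2 / 2 := by rw [inv_le_iff_one_le_mul₀' hpos]; exact hprod

theorem Real.sum_mul_sub_sum_mul_log_div_le_log_sum_mul_exp {ι : Type*} [Fintype ι]
    (x y f : ι → ℝ) (hx : ∀ i, 0 < x i) (hy : ∀ i, 0 < y i) (hys : ∑ i, y i = 1) :
    ∑ i, y i * f i - ∑ i, y i * log (y i / x i) ≤ log (∑ i, x i * exp (f i)) := by
  have jensen := strictConcaveOn_log_Ioi.concaveOn.le_map_sum (t := univ) (w := y)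
    (p := fun i ↦ x i * exp (f i) / y i) (fun i _ ↦ (hy i).le) hys
    (fun i _ ↦ Set.mem_Ioi.2 (div_pos (mul_pos (hx i) (exp_pos _)) (hy i)))
  have hlog : ∀ i, log (x i * exp (f i) / y i) = f i - log (y i / x i) := fun i ↦ by
    rw [log_div (by have := hx i; positivity) (hy i).ne', log_mul (hx i).ne' (exp_pos _).ne',
      log_exp, log_div (hy i).ne' (hx i).ne']
    ring
  have hsum : ∑ i, y i * (x i * exp (f i) / y i) = ∑ i, x i * exp (f i) :=
    sum_congr rfl fun i _ ↦ mul_div_cancel₀ _ (hy i).ne'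
  simp only [smul_eq_mul, hlog, hsum] at jensen
  simpa only [mul_sub, sum_sub_distrib] using jensen

theorem Real.log_sum_mul_exp_neg_le {ι : Type*} [Fintype ι] (x g : ι → ℝ)
    (hx : ∀ i, 0 < x i) (hxs : ∑ i, x i = 1) (hg : ∀ i, 0 ≤ g i) :
    log (∑ i, x i * exp (-g i)) ≤ -∑ i, x i * g i + ∑ i, x i * g i ^ 2 / 2 := by
  have hne : (univ : Finset ι).Nonempty :=
    nonempty_of_sum_ne_zero (by rw [hxs]; exact one_ne_zero)
  have hZ : 0 < ∑ i, x i * exp (-g i) := sum_pos (fun i _ ↦ mul_pos (hx i) (exp_pos _)) hne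
  calc log (∑ i, x i * exp (-g i)) ≤ ∑ i, x i * exp (-g i) - 1 := log_le_sub_one_of_pos hZ
    _ ≤ ∑ i, x i * (1 - g i + g i ^ 2 / 2) - 1 := by
      gcongr with i
      · exact (hx i).le
      · exact exp_neg_le_one_sub_add_sq_div_two (hg i)
    _ = -∑ i, x i * g i + ∑ i, x i * g i ^ 2 / 2 := by
      simp only [mul_add, mul_sub, mul_one, sum_add_distrib, sum_sub_distrib, hxs, mul_div_assoc]
      ring

/-- For probability vectors `x, y` in the relative interior of the simplex and
a nonnegative vector `g`, `⟨g, x - y⟩ - KL(y‖x) ≤ ∑ x i * g i ^ 2 / 2`. -/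
theorem weighted_kl_control (n : ℕ) (x y g : Fin n → ℝ)
    (hx : ∀ i, 0 < x i) (hxs : ∑ i, x i = 1)
    (hy : ∀ i, 0 < y i) (hys : ∑ i, y i = 1)
    (hg : ∀ i, 0 ≤ g i) :
    (∑ i, g i * (x i - y i)) - ∑ i, y i * Real.log (y i / x i)
      ≤ ∑ i, x i * g i ^ 2 / 2 := by
  have gibbs := sum_mul_sub_sum_mul_log_div_le_log_sum_mul_exp x y (fun i ↦ -g i) hx hy hys
  have hZ := log_sum_mul_exp_neg_le x g hx hxs hg
  have hsplit : ∑ i, g i * (x i - y i) = ∑ i, x i * g i + ∑ i, y i * -g i := by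
    rw [← sum_add_distrib]; exact sum_congr rfl fun i _ ↦ by ring
  linarith
end

section
/- Let $\{Z_t\}_{t \ge 0}$ be a time-homogeneous Markov chain on a finite state space $\mathcal{Z}$ with stationary distribution $\sigma$, satisfying geometric mixing: $\sum_{z' \in \mathcal{Z}} |\mathbb{P}(Z_t = z' \mid Z_0) - \sigma(z')| \le C \rho^t$ for all $t$ and all initial states, for constants $C > 0$ and $\rho \in (0,1)$. Fix $z \in \mathcal{Z}$ with $\sigma(z) > 0$, let $t_{\mathrm{mix}} = \lceil \log_\rho(\sigma(z)/(2C)) \rceil$, and for $n \ge 1$ let $\tau$ be the first time $t \le n-1$ with $Z_t = z$ (set $\tau = n$ if no such $t$ exists). Then for any initial state $Z_0 \ne z$ and any $1 \le i \le n-1$, $\mathbb{P}(\tau = i \mid Z_0) \le (1 - \sigma(z)/2)^{\lceil i / t_{\mathrm{mix}} \rceil - 1}$. -/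
open Finset

/-- `t`-step transition probabilities of a finite Markov chain with kernel `K`. -/
noncomputable def kpow {Z : Type*} [Fintype Z] [DecidableEq Z]
    (K : Z → Z → ℝ) : ℕ → Z → Z → ℝ
  | 0, z0, z' => if z0 = z' then 1 else 0
  | t + 1, z0, z' => ∑ u, K z0 u * kpow K t u z'

/-- `hitProb K z i z0` is the probability that the chain started at `z0` visits `z`
for the first time at time `i`. -/
noncomputable def hitProb {Z : Type*} [Fintype Z] [DecidableEq Z]
    (K : Z → Z → ℝ) (z : Z) : ℕ → Z → ℝ
  | 0, z0 => if z0 = z then 1 else 0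
  | i + 1, z0 => if z0 = z then 0 else ∑ u, K z0 u * hitProb K z i u

/-!
Let `A_t(u)` be the probability that the chain started at `u` stays off `z` at times
`0, …, t`. By the Markov property `A_{s+t}(u) ≤ A_s(u) · max_v A_t(v)`, and
`A_t(v) ≤ 1 - P^t(v, z)`, so `A_{t_mix} ≤ 1 - σ(z)/2` and hence `A_{m t_mix} ≤ (1 - σ(z)/2)^m`.
A first visit at time `i` requires staying off `z` up to time `i - 1 ≥ (⌈i / t_mix⌉ - 1) t_mix`.
-/

/-- The probability that the chain started at `u` avoids `z` at all times `0, …, t`. -/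
noncomputable def avoidProb {Z : Type*} [Fintype Z] [DecidableEq Z]
    (K : Z → Z → ℝ) (z : Z) : ℕ → Z → ℝ
  | 0, u => if u = z then 0 else 1
  | t + 1, u => if u = z then 0 else ∑ v, K u v * avoidProb K z t v

lemma Real.mul_pow_ceil_log_div_log_le {a C ρ : ℝ} (ha : 0 < a) (hC : 0 < C)
    (hρ0 : 0 < ρ) (hρ1 : ρ < 1) :
    C * ρ ^ ⌈Real.log (a / C) / Real.log ρ⌉₊ ≤ a := by
  have hpow : ρ ^ ⌈Real.logb ρ (a / C)⌉₊ ≤ a / C := by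
    calc ρ ^ ⌈Real.logb ρ (a / C)⌉₊ = ρ ^ (⌈Real.logb ρ (a / C)⌉₊ : ℝ) :=
          (Real.rpow_natCast ρ _).symm
      _ ≤ ρ ^ Real.logb ρ (a / C) :=
          Real.rpow_le_rpow_of_exponent_ge hρ0 hρ1.le (Nat.le_ceil _)
      _ = a / C := Real.rpow_logb hρ0 hρ1.ne (div_pos ha hC)
  calc C * ρ ^ ⌈Real.log (a / C) / Real.log ρ⌉₊ ≤ C * (a / C) :=
        mul_le_mul_of_nonneg_left hpow hC.le
    _ = a := mul_div_cancel₀ a hC.ne'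

lemma Nat.ceil_div_sub_one_mul_lt {i t : ℕ} (hi : 0 < i) (ht : 0 < t) :
    (⌈(i : ℝ) / t⌉₊ - 1) * t < i := by
  have hlt : ((⌈(i : ℝ) / t⌉₊ - 1 : ℕ) : ℝ) < (i : ℝ) / t := by
    apply Nat.lt_ceil.mp
    have : 0 < ⌈(i : ℝ) / t⌉₊ := Nat.ceil_pos.mpr (by positivity)
    omega
  rw [lt_div_iff₀ (by exact_mod_cast ht)] at hlt
  exact_mod_cast hlt

section MarkovChain

variable {Z : Type*} [Fintype Z] [DecidableEq Z] (K : Z → Z → ℝ) (z : Z)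

lemma kpow_nonneg (hK0 : ∀ u v, 0 ≤ K u v) (t : ℕ) (u v : Z) : 0 ≤ kpow K t u v := by
  induction t generalizing u with
  | zero => unfold kpow; split_ifs <;> norm_num
  | succ t ih => exact sum_nonneg fun w _ => mul_nonneg (hK0 u w) (ih w)

lemma sum_kpow_eq_one (hK1 : ∀ u, ∑ v, K u v = 1) (t : ℕ) (u : Z) :
    ∑ v, kpow K t u v = 1 := by
  induction t generalizing u with
  | zero => simp [kpow]
  | succ t ih => simp only [kpow]; rw [sum_comm]; simp [← mul_sum, ih, hK1]

lemma kpow_le_one (hK0 : ∀ u v, 0 ≤ K u v) (hK1 : ∀ u, ∑ v, K u v = 1) (t : ℕ) (u v : Z) :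
    kpow K t u v ≤ 1 :=
  (single_le_sum (fun w _ => kpow_nonneg K hK0 t u w) (mem_univ v)).trans_eq
    (sum_kpow_eq_one K hK1 t u)

lemma avoidProb_self (t : ℕ) : avoidProb K z t z = 0 := by
  cases t <;> simp [avoidProb]

lemma avoidProb_add_kpow_le_one (hK0 : ∀ u v, 0 ≤ K u v) (hK1 : ∀ u, ∑ v, K u v = 1)
    (t : ℕ) (u : Z) : avoidProb K z t u + kpow K t u z ≤ 1 := by
  induction t generalizing u with
  | zero => by_cases hu : u = z <;> simp [avoidProb, kpow, hu]
  | succ t ih =>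
    by_cases hu : u = z
    · simpa [avoidProb, hu] using kpow_le_one K hK0 hK1 (t + 1) z z
    · calc avoidProb K z (t + 1) u + kpow K (t + 1) u z
            = ∑ v, K u v * (avoidProb K z t v + kpow K t v z) := by
              simp only [avoidProb, kpow, hu, if_false, mul_add, sum_add_distrib]
          _ ≤ ∑ v, K u v := sum_le_sum fun v _ => mul_le_of_le_one_right (hK0 u v) (ih v)
          _ = 1 := hK1 u

lemma avoidProb_le_one (hK0 : ∀ u v, 0 ≤ K u v) (hK1 : ∀ u, ∑ v, K u v = 1)
    (t : ℕ) (u : Z) : avoidProb K z t u ≤ 1 := by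
  linarith [avoidProb_add_kpow_le_one K z hK0 hK1 t u, kpow_nonneg K hK0 t u z]

/-- The Markov property at time `s`: after staying off `z` up to time `s`, the chain must
stay off it for `t` more steps from wherever it is. -/
lemma avoidProb_add_le_mul (hK0 : ∀ u v, 0 ≤ K u v) {t : ℕ} {B : ℝ}
    (hB : ∀ v, avoidProb K z t v ≤ B) (s : ℕ) (u : Z) :
    avoidProb K z (s + t) u ≤ avoidProb K z s u * B := by
  induction s generalizing u with
  | zero =>
    by_cases hu : u = z
    · simp [hu, avoidProb_self]
    · simpa [avoidProb, hu] using hB u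
  | succ s ih =>
    by_cases hu : u = z
    · simp [hu, avoidProb_self]
    · rw [Nat.add_right_comm]
      simp only [avoidProb, hu, if_false, sum_mul, mul_assoc]
      exact sum_le_sum fun v _ => mul_le_mul_of_nonneg_left (ih v) (hK0 u v)

lemma avoidProb_antitone (hK0 : ∀ u v, 0 ≤ K u v) (hK1 : ∀ u, ∑ v, K u v = 1) (u : Z) :
    Antitone fun t => avoidProb K z t u := by
  intro s t hst
  obtain ⟨d, rfl⟩ := Nat.exists_eq_add_of_le hst
  simpa using avoidProb_add_le_mul K z hK0 (avoidProb_le_one K z hK0 hK1 d) s u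

lemma avoidProb_mul_le_pow (hK0 : ∀ u v, 0 ≤ K u v) {t : ℕ} {B : ℝ}
    (hB : ∀ v, avoidProb K z t v ≤ B) (m : ℕ) (u : Z) :
    avoidProb K z (m * t) u ≤ B ^ m := by
  have hB0 : 0 ≤ B := (avoidProb_self K z t).symm.le.trans (hB z)
  induction m generalizing u with
  | zero => simp only [Nat.zero_mul, pow_zero, avoidProb]; split_ifs <;> norm_num
  | succ m ih =>
    calc avoidProb K z ((m + 1) * t) u ≤ avoidProb K z (m * t) u * B := by
          rw [Nat.succ_mul]; exact avoidProb_add_le_mul K z hK0 hB (m * t) u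
      _ ≤ B ^ m * B := mul_le_mul_of_nonneg_right (ih u) hB0
      _ = B ^ (m + 1) := (pow_succ B m).symm

lemma hitProb_succ_le_avoidProb (hK0 : ∀ u v, 0 ≤ K u v) (hK1 : ∀ u, ∑ v, K u v = 1)
    (i : ℕ) (u : Z) : hitProb K z (i + 1) u ≤ avoidProb K z i u := by
  induction i generalizing u with
  | zero =>
    by_cases hu : u = z
    · simp [hitProb, avoidProb, hu]
    · simp only [hitProb, avoidProb, hu, if_false]
      calc ∑ v, K u v * (if v = z then 1 else 0) ≤ ∑ v, K u v :=
            sum_le_sum fun v _ => mul_le_of_le_one_right (hK0 u v) (by split_ifs <;> norm_num)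
        _ = 1 := hK1 u
  | succ i ih =>
    by_cases hu : u = z
    · simp [hitProb, avoidProb, hu]
    · rw [hitProb, avoidProb, if_neg hu, if_neg hu]
      exact sum_le_sum fun v _ => mul_le_mul_of_nonneg_left (ih v) (hK0 u v)

theorem hitProb_le_pow_of_le_kpow (hK0 : ∀ u v, 0 ≤ K u v) (hK1 : ∀ u, ∑ v, K u v = 1)
    {t : ℕ} (ht : 0 < t) {ε : ℝ} (hε : ∀ v, ε ≤ kpow K t v z) {i : ℕ} (hi : 1 ≤ i) (u : Z) :
    hitProb K z i u ≤ (1 - ε) ^ (⌈(i : ℝ) / t⌉₊ - 1) := by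
  have hblock : ∀ v, avoidProb K z t v ≤ 1 - ε := fun v => by
    linarith [avoidProb_add_kpow_le_one K z hK0 hK1 t v, hε v]
  obtain ⟨j, rfl⟩ := Nat.exists_eq_add_of_le' hi
  have hj : (⌈((j + 1 : ℕ) : ℝ) / t⌉₊ - 1) * t ≤ j :=
    Nat.lt_succ_iff.mp (Nat.ceil_div_sub_one_mul_lt j.succ_pos ht)
  calc hitProb K z (j + 1) u ≤ avoidProb K z j u := hitProb_succ_le_avoidProb K z hK0 hK1 j u
    _ ≤ avoidProb K z ((⌈((j + 1 : ℕ) : ℝ) / t⌉₊ - 1) * t) u :=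
        avoidProb_antitone K z hK0 hK1 u hj
    _ ≤ (1 - ε) ^ (⌈((j + 1 : ℕ) : ℝ) / t⌉₊ - 1) := avoidProb_mul_le_pow K z hK0 hblock _ u

end MarkovChain

theorem hitting_time_tail_bound_general {Z : Type*} [Fintype Z] [DecidableEq Z]
    (K : Z → Z → ℝ) (σ : Z → ℝ) (C ρ : ℝ)
    (hK0 : ∀ z z', 0 ≤ K z z') (hK1 : ∀ z, ∑ z', K z z' = 1)
    (hC : 0 < C) (hρ0 : 0 < ρ) (hρ1 : ρ < 1)
    (hmix : ∀ (t : ℕ) (z0 : Z), ∑ z', |kpow K t z0 z' - σ z'| ≤ C * ρ ^ t)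
    (z : Z) (hz : 0 < σ z)
    (tmix : ℕ) (htmix : tmix = ⌈Real.log (σ z / (2 * C)) / Real.log ρ⌉₊)
    (z0 : Z) (hz0 : z0 ≠ z)
    (i : ℕ) (hi1 : 1 ≤ i) :
    hitProb K z i z0 ≤ (1 - σ z / 2) ^ (⌈(i : ℝ) / (tmix : ℝ)⌉₊ - 1) := by
  have hdist : C * ρ ^ tmix ≤ σ z / 2 := by
    rw [htmix, ← div_div]
    exact Real.mul_pow_ceil_log_div_log_le (by positivity) hC hρ0 hρ1
  have hvisit : ∀ u, σ z / 2 ≤ kpow K tmix u z := fun u => by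
    have hclose := (single_le_sum (fun z' _ => abs_nonneg (kpow K tmix u z' - σ z'))
      (mem_univ z)).trans (hmix tmix u)
    linarith [(abs_le.mp hclose).1]
  have htmix_pos : 0 < tmix := by
    by_contra! h
    have h0 := hvisit z0
    rw [Nat.le_zero.mp h, kpow, if_neg hz0] at h0
    linarith
  exact hitProb_le_pow_of_le_kpow K z hK0 hK1 htmix_pos hvisit hi1 z0

/-- hitting-time tail bound for a geometrically mixing finite Markov chain:
for a target state `z` with `σ z > 0`, any start `z0 ≠ z` and `1 ≤ i ≤ n - 1`,
`ℙ(τ = i | Z_0 = z0) ≤ (1 - σ z / 2) ^ (⌈i / t_mix⌉ - 1)`. -/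
theorem hitting_time_tail_bound {Z : Type*} [Fintype Z] [DecidableEq Z]
    (K : Z → Z → ℝ) (σ : Z → ℝ) (C ρ : ℝ)
    (hK0 : ∀ z z', 0 ≤ K z z') (hK1 : ∀ z, ∑ z', K z z' = 1)
    (hσ0 : ∀ z, 0 ≤ σ z) (hσ1 : ∑ z, σ z = 1)
    (hstat : ∀ z', ∑ z, σ z * K z z' = σ z')
    (hC : 0 < C) (hρ0 : 0 < ρ) (hρ1 : ρ < 1)
    (hmix : ∀ (t : ℕ) (z0 : Z), ∑ z', |kpow K t z0 z' - σ z'| ≤ C * ρ ^ t)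
    (z : Z) (hz : 0 < σ z)
    (tmix : ℕ) (htmix : tmix = ⌈Real.log (σ z / (2 * C)) / Real.log ρ⌉₊)
    (n : ℕ) (z0 : Z) (hz0 : z0 ≠ z)
    (i : ℕ) (hi1 : 1 ≤ i) (hin : i ≤ n - 1) :
    hitProb K z i z0 ≤ (1 - σ z / 2) ^ (⌈(i : ℝ) / (tmix : ℝ)⌉₊ - 1) :=
  hitting_time_tail_bound_general K σ C ρ hK0 hK1 hC hρ0 hρ1 hmix z hz tmix htmix z0 hz0 i hi1
end

section
/- For $p \in (0,1)$, the negative Tsallis entropy $w(x) = -\sum_{i=1}^n x_i^p$ on the simplex satisfies: its Bregman divergence obeys $D(x, y) \ge \frac{p(1-p)}{n}\|x - y\|_1^2$ for all $x, y \in \mathrm{ReInt}(\Delta_n)$. -/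
/-!
On `(0, 1]` we have `t ^ (p - 2) ≥ t⁻¹`, so `t ↦ -t ^ p - p (1 - p) t log t` is convex there
and the Bregman divergence of `-∑ xᵢ ^ p` dominates `p (1 - p)` times the Kullback–Leibler
divergence `∑ yᵢ klFun (xᵢ / yᵢ)`. (Comparing with `t ^ (p - 2) ≥ 1` instead would lose a
factor `2`.)
Pinsker's inequality `(∑ |xᵢ - yᵢ|)² ≤ 2 KL(x ‖ y)` follows from the pointwise bound
`klFun t ≥ 3 (t - 1)² / (2 t + 4)` (the difference is convex and vanishes to second order at
`t = 1`) and Sedrakyan's lemma, since `∑ (2 xᵢ + 4 yᵢ) / 3 = 2`.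
This gives the constant `p (1 - p) / 2`, and `x ≠ y` forces `n ≥ 2`.
-/

open Finset

/-- Bregman divergence of the negative Tsallis entropy `w(x) = -∑ x_i^p`
(whose gradient is `(-p x_i^(p-1))_i`). -/
noncomputable def tsallisDiv {ι : Type*} [Fintype ι] (p : ℝ) (x y : ι → ℝ) : ℝ :=
  (-∑ i, x i ^ p) + (∑ i, y i ^ p) + p * ∑ i, y i ^ (p - 1) * (x i - y i)

open Real Set InformationTheory

theorem ConvexOn.add_deriv_mul_sub_le {S : Set ℝ} {f : ℝ → ℝ} {f' x y : ℝ}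
    (hf : ConvexOn ℝ S f) (hx : x ∈ S) (hy : y ∈ S) (hd : HasDerivAt f f' x) :
    f x + f' * (y - x) ≤ f y := by
  rcases lt_trichotomy x y with hxy | rfl | hyx
  · have := hf.le_slope_of_hasDerivAt hx hy hxy hd
    rw [slope_def_field, le_div_iff₀ (sub_pos.2 hxy)] at this
    linarith
  · simp
  · have := hf.slope_le_of_hasDerivAt hy hx hyx hd
    rw [slope_def_field, div_le_iff₀ (sub_pos.2 hyx)] at this
    linarith

section Pinsker

theorem hasDerivAt_klFun_sub_three_mul_sq_div {t : ℝ} (ht : 0 < t) :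
    HasDerivAt (fun t => klFun t - 3 * (t - 1) ^ 2 / (2 * t + 4))
      (log t - 3 / 2 * (1 - 9 * ((t + 2) ^ 2)⁻¹)) t := by
  have hq := (((hasDerivAt_id' t).sub_const 1).fun_pow 2 |>.const_mul 3).fun_div
    (((hasDerivAt_id' t).const_mul 2).add_const 4) (by positivity)
  refine ((hasDerivAt_klFun ht.ne').sub hq).congr_deriv ?_
  field_simp
  ring

theorem convexOn_klFun_sub_three_mul_sq_div :
    ConvexOn ℝ (Ioi 0) (fun t => klFun t - 3 * (t - 1) ^ 2 / (2 * t + 4)) := by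
  have hf'' : ∀ t : ℝ, 0 < t → HasDerivAt
      (fun t => log t - 3 / 2 * (1 - 9 * ((t + 2) ^ 2)⁻¹))
      (t⁻¹ - 27 * ((t + 2) ^ 3)⁻¹) t := by
    intro t ht
    have hr := (((hasDerivAt_id' t).add_const 2).fun_pow 2).fun_inv (by positivity)
    refine ((hasDerivAt_log ht.ne').sub
      ((hr.const_mul 9).const_sub 1 |>.const_mul (3 / 2))).congr_deriv ?_
    field_simp
    ring
  refine convexOn_of_hasDerivWithinAt2_nonneg (convex_Ioi 0)
    (fun t ht => (hasDerivAt_klFun_sub_three_mul_sq_div ht).continuousAt.continuousWithinAt)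
    (fun t ht => (hasDerivAt_klFun_sub_three_mul_sq_div (interior_subset ht)).hasDerivWithinAt)
    (fun t ht => (hf'' t (interior_subset ht)).hasDerivWithinAt) ?_
  rw [interior_Ioi]
  intro t (ht : 0 < t)
  rw [sub_nonneg, ← div_eq_mul_inv, div_le_iff₀ (by positivity), inv_mul_eq_div,
    le_div_iff₀ ht]
  -- `(t + 2)^3 - 27 t = (t - 1)^2 (t + 8)`
  nlinarith [mul_nonneg (sq_nonneg (t - 1)) (by linarith : (0:ℝ) ≤ t + 8)]

theorem three_mul_sq_div_le_klFun {t : ℝ} (ht : 0 < t) :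
    3 * (t - 1) ^ 2 / (2 * t + 4) ≤ klFun t := by
  have := convexOn_klFun_sub_three_mul_sq_div.add_deriv_mul_sub_le (mem_Ioi.2 one_pos)
    (mem_Ioi.2 ht) (hasDerivAt_klFun_sub_three_mul_sq_div one_pos)
  norm_num [klFun_one] at this
  linarith

theorem three_mul_sq_div_le_mul_klFun {a b : ℝ} (ha : 0 < a) (hb : 0 < b) :
    3 * (a - b) ^ 2 / (2 * a + 4 * b) ≤ b * klFun (a / b) := by
  have key := mul_le_mul_of_nonneg_left (three_mul_sq_div_le_klFun (div_pos ha hb)) hb.le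
  refine Eq.trans_le ?_ key
  field_simp

theorem sq_sum_abs_sub_le_two_mul_sum_mul_klFun {ι : Type*} [Fintype ι] {x y : ι → ℝ}
    (hx : ∀ i, 0 < x i) (hxs : ∑ i, x i = 1) (hy : ∀ i, 0 < y i) (hys : ∑ i, y i = 1) :
    (∑ i, |x i - y i|) ^ 2 ≤ 2 * ∑ i, y i * klFun (x i / y i) := by
  have hg : ∀ i ∈ Finset.univ, 0 < (2 * x i + 4 * y i) / 3 := fun i _ => by
    have := hx i; have := hy i; positivity
  have hgs : ∑ i, (2 * x i + 4 * y i) / 3 = 2 := by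
    simp only [← sum_div, sum_add_distrib, ← mul_sum, hxs, hys]
    norm_num
  have sedrakyan := sq_sum_div_le_sum_sq_div Finset.univ (fun i => |x i - y i|) hg
  rw [hgs, div_le_iff₀' two_pos] at sedrakyan
  refine sedrakyan.trans (mul_le_mul_of_nonneg_left (sum_le_sum fun i _ => ?_) zero_le_two)
  rw [sq_abs, div_div_eq_mul_div, mul_comm]
  exact three_mul_sq_div_le_mul_klFun (hx i) (hy i)

end Pinsker

section Tsallis

variable {p : ℝ}

theorem hasDerivAt_neg_rpow_sub_mul_mul_log {t : ℝ} (ht : 0 < t) :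
    HasDerivAt (fun t => -t ^ p - p * (1 - p) * (t * log t))
      (-(p * t ^ (p - 1)) - p * (1 - p) * (log t + 1)) t :=
  (hasDerivAt_rpow_const (Or.inl ht.ne')).neg.sub ((hasDerivAt_mul_log ht.ne').const_mul _)

theorem convexOn_neg_rpow_sub_mul_mul_log (hp0 : 0 ≤ p) (hp1 : p ≤ 1) :
    ConvexOn ℝ (Set.Ioc 0 1) (fun t => -t ^ p - p * (1 - p) * (t * log t)) := by
  have hf'' : ∀ t : ℝ, 0 < t → HasDerivAt
      (fun t => -(p * t ^ (p - 1)) - p * (1 - p) * (log t + 1))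
      (p * (1 - p) * (t ^ (p - 2) - t⁻¹)) t := by
    intro t ht
    refine (((hasDerivAt_rpow_const (Or.inl ht.ne')).const_mul p).neg.sub
      (((hasDerivAt_log ht.ne').add_const 1).const_mul _)).congr_deriv ?_
    rw [show p - 1 - 1 = p - 2 by ring]
    ring
  refine convexOn_of_hasDerivWithinAt2_nonneg (convex_Ioc 0 1)
    (fun t ht => (hasDerivAt_neg_rpow_sub_mul_mul_log ht.1).continuousAt.continuousWithinAt)
    (fun t ht => (hasDerivAt_neg_rpow_sub_mul_mul_log (interior_subset ht).1).hasDerivWithinAt)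
    (fun t ht => (hf'' t (interior_subset ht).1).hasDerivWithinAt) ?_
  rw [interior_Ioc]
  intro t ⟨ht0, ht1⟩
  have hinv : t⁻¹ ≤ t ^ (p - 2) := by
    rw [← rpow_neg_one]
    exact rpow_le_rpow_of_exponent_ge ht0 ht1.le (by linarith)
  exact mul_nonneg (mul_nonneg hp0 (by linarith)) (sub_nonneg.2 hinv)

theorem mul_mul_klFun_le_rpow_sub_rpow_add (hp0 : 0 ≤ p) (hp1 : p ≤ 1) {a b : ℝ}
    (ha : a ∈ Set.Ioc 0 1) (hb : b ∈ Set.Ioc 0 1) :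
    p * (1 - p) * (b * klFun (a / b)) ≤ b ^ p - a ^ p + p * (b ^ (p - 1) * (a - b)) := by
  have tangent := (convexOn_neg_rpow_sub_mul_mul_log hp0 hp1).add_deriv_mul_sub_le hb ha
    (hasDerivAt_neg_rpow_sub_mul_mul_log hb.1)
  have hkl : b * klFun (a / b) = a * log a - a * log b + b - a := by
    have hb0 := hb.1.ne'
    rw [klFun_apply, log_div ha.1.ne' hb0]
    field_simp
  rw [hkl]
  linarith

theorem mul_sum_mul_klFun_le_tsallisDiv {ι : Type*} [Fintype ι] (hp0 : 0 ≤ p) (hp1 : p ≤ 1)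
    {x y : ι → ℝ} (hx : ∀ i, x i ∈ Set.Ioc 0 1) (hy : ∀ i, y i ∈ Set.Ioc 0 1) :
    p * (1 - p) * ∑ i, y i * klFun (x i / y i) ≤ tsallisDiv p x y := by
  have hsum :
      tsallisDiv p x y = ∑ i, (y i ^ p - x i ^ p + p * (y i ^ (p - 1) * (x i - y i))) := by
    rw [tsallisDiv, sum_add_distrib, sum_sub_distrib, mul_sum]
    ring
  rw [hsum, mul_sum]
  exact sum_le_sum fun i _ => mul_mul_klFun_le_rpow_sub_rpow_add hp0 hp1 (hx i) (hy i)

end Tsallis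

theorem Fintype.one_lt_card_of_sum_eq_of_ne {ι M : Type*} [Fintype ι] [AddCommMonoid M]
    {x y : ι → M} (hs : ∑ i, x i = ∑ i, y i) (hxy : x ≠ y) : 1 < Fintype.card ι := by
  rw [Fintype.one_lt_card_iff_nontrivial]
  by_contra h
  rw [not_nontrivial_iff_subsingleton] at h
  exact hxy (funext fun i => by simpa only [Fintype.sum_subsingleton _ i] using hs)

/-- for `p ∈ (0,1)`, the negative Tsallis entropy on the simplex is
`p(1-p)/n`-strongly convex w.r.t. the `ℓ₁` norm:
`D(x,y) ≥ p(1-p)/n * ‖x - y‖₁²` for `x, y` in the relative interior. -/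
theorem tsallis_strong_convexity {ι : Type*} [Fintype ι]
    (p : ℝ) (hp0 : 0 < p) (hp1 : p < 1) (x y : ι → ℝ)
    (hx : ∀ i, 0 < x i) (hxs : ∑ i, x i = 1)
    (hy : ∀ i, 0 < y i) (hys : ∑ i, y i = 1) :
    p * (1 - p) / (Fintype.card ι : ℝ) * (∑ i, |x i - y i|) ^ 2
      ≤ tsallisDiv p x y := by
  have hpp : 0 ≤ p * (1 - p) := mul_nonneg hp0.le (by linarith)
  have mem_Ioc (z : ι → ℝ) (hz : ∀ i, 0 < z i) (hzs : ∑ i, z i = 1) (i : ι) :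
      z i ∈ Set.Ioc 0 1 :=
    ⟨hz i, hzs ▸ single_le_sum (fun j _ => (hz j).le) (mem_univ i)⟩
  have half : p * (1 - p) / 2 * (∑ i, |x i - y i|) ^ 2 ≤ tsallisDiv p x y := by
    calc p * (1 - p) / 2 * (∑ i, |x i - y i|) ^ 2
        ≤ p * (1 - p) * ∑ i, y i * klFun (x i / y i) := by
          have pinsker := sq_sum_abs_sub_le_two_mul_sum_mul_klFun hx hxs hy hys
          linarith [mul_le_mul_of_nonneg_left pinsker hpp]
      _ ≤ tsallisDiv p x y :=
          mul_sum_mul_klFun_le_tsallisDiv hp0.le hp1.le (mem_Ioc x hx hxs) (mem_Ioc y hy hys)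
  rcases eq_or_ne x y with rfl | hxy
  · simp [tsallisDiv]
  · have hcard : (2 : ℝ) ≤ Fintype.card ι := by
      exact_mod_cast Fintype.one_lt_card_of_sum_eq_of_ne (hxs.trans hys.symm) hxy
    calc p * (1 - p) / (Fintype.card ι : ℝ) * (∑ i, |x i - y i|) ^ 2
        ≤ p * (1 - p) / 2 * (∑ i, |x i - y i|) ^ 2 := by gcongr
      _ ≤ tsallisDiv p x y := half
end

section
/- Generalized Azuma inequality for conditionally constrained increments: fix $k \ge 1$, a finite index set $I$, $\delta \in (0,1)$, $b > 0$, and $Z, \varepsilon > 0$ with $Z \ge 2\max\{\sqrt{k}\,\varepsilon,\ 2b\sqrt{\log(k|I|/\delta)}\}$. Let $(\Omega, \mathcal{F}, \mathbb{P})$ carry a filtration $\mathcal{F}_0 = \{\emptyset, \Omega\} \subseteq \mathcal{F}_1 \subseteq \cdots \subseteq \mathcal{F}_k$ and random variables $X_{t,i}$ with $|X_{t,i}| \le b$, $X_{t,i}$ being $\mathcal{F}_{t+1}$-measurable, and such that $\mathbb{E}[X_{t,i} \mid \mathcal{F}_t]\, \mathbf{1}\{\max_{j \in I} Y_{t,j}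 \le Z\sqrt{t}\} \le \varepsilon$ for all $i \in I$ and $0 \le t \le k-1$, where $Y_{0,i} = 0$ and $Y_{t+1,i} = Y_{t,i} + X_{t,i}$. Then $\mathbb{P}(Y_{t,i} \le Z\sqrt{t} \text{ for all } 0 \le t \le k \text{ and all } i \in I) \ge 1 - \delta$. -/
/-!
Switch the increments off once the envelope has been left: `X' t i` is `X t i` on the event that
all sums `Y s j`, `s ≤ t`, have stayed below `Z √s`, and `0` elsewhere. That event is
`ℱ t`-measurable, so the hypothesis gives `E[X' t i | ℱ t] ≤ ε` everywhere. For bounded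
increments with conditional drift at most `ε`, convexity of `exp` (Hoeffding) gives
`E[exp (s X') | ℱ t] ≤ exp (s ε + s² b² / 2)`, and the Chernoff bound turns this into Azuma's
inequality. Since `t ε ≤ Z √t / 2`, the sum of the first `t` modified increments exceeds `Z √t`
with probability at most `exp (-Z² / (8 b²)) ≤ δ / (k |I|)`; a union bound over `t ≤ k` and
`i ∈ I` costs `δ`. Finally, as long as the modified sums stay below the envelope no increment has
been switched off, so they coincide with the `Y t i`.
-/

open MeasureTheory Finset

namespace Real

lemma sinh_le_mul_cosh {y : ℝ} (hy : 0 ≤ y) : sinh y ≤ y * cosh y := by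
  rcases hy.eq_or_lt with rfl | hy
  · simp
  obtain ⟨c, ⟨hc0, hcy⟩, hslope⟩ := exists_deriv_eq_slope sinh hy continuous_sinh.continuousOn
    differentiable_sinh.differentiableOn
  rw [deriv_sinh, sinh_zero, sub_zero, sub_zero, eq_div_iff hy.ne'] at hslope
  rw [← hslope, mul_comm]
  gcongr
  rw [cosh_le_cosh, abs_of_pos hc0, abs_of_pos hy]
  exact hcy.le

/-- The chord of `exp` over `[-s b, s b]`. -/
lemma exp_mul_le_cosh_add_div_mul_sinh {s b x : ℝ} (hb : 0 < b) (hx : |x| ≤ b) :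
    exp (s * x) ≤ cosh (s * b) + x / b * sinh (s * b) := by
  obtain ⟨hxl, hxr⟩ := abs_le.1 hx
  have hchord := convexOn_exp.2 (Set.mem_univ (-(s * b))) (Set.mem_univ (s * b))
    (div_nonneg (by linarith) (by linarith) : 0 ≤ (b - x) / (2 * b))
    (div_nonneg (by linarith) (by linarith) : 0 ≤ (b + x) / (2 * b)) (by field_simp; ring)
  have hpoint : (b - x) / (2 * b) * -(s * b) + (b + x) / (2 * b) * (s * b) = s * x := by
    field_simp
    ring
  have hvalue : (b - x) / (2 * b) * exp (-(s * b)) + (b + x) / (2 * b) * exp (s * b)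
      = cosh (s * b) + x / b * sinh (s * b) := by
    rw [cosh_eq, sinh_eq]
    field_simp
    ring
  simpa only [smul_eq_mul, hpoint, hvalue] using hchord

lemma cosh_add_sinh_div_mul_le_exp {s b ε : ℝ} (hs : 0 ≤ s) (hb : 0 < b) (hε : 0 ≤ ε) :
    cosh (s * b) + sinh (s * b) / b * ε ≤ exp (s * ε + s ^ 2 * b ^ 2 / 2) := by
  have hsinh : sinh (s * b) / b ≤ s * cosh (s * b) := by
    rw [div_le_iff₀ hb]
    linarith [sinh_le_mul_cosh (mul_nonneg hs hb.le)]
  calc cosh (s * b) + sinh (s * b) / b * ε ≤ (1 + s * ε) * cosh (s * b) := by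
        nlinarith [mul_le_mul_of_nonneg_right hsinh hε]
    _ ≤ exp (s * ε) * exp ((s * b) ^ 2 / 2) := by
        gcongr
        · linarith [add_one_le_exp (s * ε)]
        · exact cosh_le_exp_half_sq _
    _ = exp (s * ε + s ^ 2 * b ^ 2 / 2) := by rw [← exp_add]; ring_nf

lemma mul_exp_neg_le_of_sqrt_log_le {C δ b Z : ℝ} (hC : 0 ≤ C) (hδ : 0 < δ) (hb : 0 < b)
    (hZ : 4 * b * √(log (C / δ)) ≤ Z) : C * exp (-(Z ^ 2 / (8 * b ^ 2))) ≤ δ := by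
  rcases hC.eq_or_lt with rfl | hC
  · simpa using hδ.le
  have hlog : log (C / δ) ≤ Z ^ 2 / (8 * b ^ 2) := by
    rw [le_div_iff₀ (by positivity)]
    rcases le_or_gt (log (C / δ)) 0 with hL | hL
    · nlinarith [sq_nonneg Z, sq_nonneg b]
    · have hsq : (4 * b * √(log (C / δ))) ^ 2 ≤ Z ^ 2 := pow_le_pow_left₀ (by positivity) hZ 2
      rw [mul_pow, sq_sqrt hL.le] at hsq
      nlinarith [sq_nonneg b]
  calc C * exp (-(Z ^ 2 / (8 * b ^ 2))) ≤ C * exp (-log (C / δ)) := by gcongr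
    _ = δ := by rw [exp_neg, exp_log (by positivity)]; field_simp

end Real

section CondExp

variable {Ω : Type*} {m m₀ : MeasurableSpace Ω} {μ : Measure Ω}

lemma integral_mul_le_of_condExp_le [IsFiniteMeasure μ] (hm : m ≤ m₀) {f g : Ω → ℝ} {C : ℝ}
    (hf : StronglyMeasurable[m] f) (hf0 : 0 ≤ f) (hfi : Integrable f μ) (hgi : Integrable g μ)
    (hfgi : Integrable (f * g) μ) (hgC : μ[g|m] ≤ᵐ[μ] fun _ => C) :
    ∫ ω, f ω * g ω ∂μ ≤ C * ∫ ω, f ω ∂μ := by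
  have hpull : μ[f * g|m] =ᵐ[μ] f * μ[g|m] := condExp_mul_of_stronglyMeasurable_left hf hfgi hgi
  calc ∫ ω, f ω * g ω ∂μ = ∫ ω, (f * μ[g|m]) ω ∂μ :=
        (integral_condExp hm).symm.trans (integral_congr_ae hpull)
    _ ≤ ∫ ω, f ω * C ∂μ := by
        refine integral_mono_ae (integrable_condExp.congr hpull) (hfi.mul_const C) ?_
        filter_upwards [hgC] with ω hω using mul_le_mul_of_nonneg_left hω (hf0 ω)
    _ = C * ∫ ω, f ω ∂μ := by rw [integral_mul_const, mul_comm]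

lemma condExp_indicator_le {f : Ω → ℝ} {s : Set Ω} {ε : ℝ}
    (hf : Integrable f μ) (hs : MeasurableSet[m] s) (hε : 0 ≤ ε)
    (hfs : ∀ᵐ ω ∂μ, ω ∈ s → μ[f|m] ω ≤ ε) :
    μ[s.indicator f|m] ≤ᵐ[μ] fun _ => ε := by
  filter_upwards [condExp_indicator hf hs, hfs] with ω hind hω
  rw [hind]
  by_cases hmem : ω ∈ s
  · simpa [Set.indicator_of_mem hmem] using hω hmem
  · simpa [Set.indicator_of_notMem hmem] using hε

lemma condExp_exp_mul_le [IsFiniteMeasure μ] (hm : m ≤ m₀) {X : Ω → ℝ} {s b ε : ℝ}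
    (hs : 0 ≤ s) (hb : 0 < b) (hε : 0 ≤ ε) (hX : AEStronglyMeasurable X μ)
    (hXb : ∀ ω, |X ω| ≤ b) (hXε : μ[X|m] ≤ᵐ[μ] fun _ => ε) :
    μ[fun ω => Real.exp (s * X ω)|m] ≤ᵐ[μ] fun _ => Real.exp (s * ε + s ^ 2 * b ^ 2 / 2) := by
  have hXi : Integrable X μ := .of_bound hX b (ae_of_all _ fun ω => hXb ω)
  set a := Real.sinh (s * b) / b
  have hchord : μ[fun ω => Real.exp (s * X ω)|m]
      ≤ᵐ[μ] μ[(fun _ => Real.cosh (s * b)) + a • X|m] :=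
    condExp_mono (ProbabilityTheory.integrable_exp_mul_of_mem_Icc hX.aemeasurable
        (ae_of_all _ fun ω => abs_le.1 (hXb ω)))
      ((integrable_const _).add (hXi.smul a))
      (ae_of_all _ fun ω => (Real.exp_mul_le_cosh_add_div_mul_sinh hb (hXb ω)).trans_eq
        (by simp only [a, Pi.add_apply, Pi.smul_apply, smul_eq_mul]; ring))
  have hlin : μ[(fun _ => Real.cosh (s * b)) + a • X|m]
      =ᵐ[μ] (fun _ => Real.cosh (s * b)) + a • μ[X|m] := by
    filter_upwards [condExp_add (integrable_const _) (hXi.smul a) m, condExp_smul a X m]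
      with ω hadd hsmul
    rw [hadd, Pi.add_apply, hsmul, condExp_const hm, Pi.add_apply]
  filter_upwards [hchord, hlin, hXε] with ω h1 h2 h3
  refine h1.trans ?_
  rw [h2]
  calc Real.cosh (s * b) + a * μ[X|m] ω ≤ Real.cosh (s * b) + a * ε := by
        gcongr
    _ ≤ _ := Real.cosh_add_sinh_div_mul_le_exp hs hb hε

end CondExp

section Azuma

open Real ProbabilityTheory

variable {Ω : Type*} {m₀ : MeasurableSpace Ω} {μ : Measure Ω} {ℱ : Filtration ℕ m₀}
  {D : ℕ → Ω → ℝ} {b ε : ℝ}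

lemma integrable_exp_mul_sum_range [IsFiniteMeasure μ] (hD : ∀ t, AEStronglyMeasurable (D t) μ)
    (hDb : ∀ t ω, |D t ω| ≤ b) (n : ℕ) (s : ℝ) :
    Integrable (fun ω => exp (s * ∑ t ∈ range n, D t ω)) μ := by
  refine integrable_exp_mul_of_mem_Icc (a := -(n * b)) (b := n * b)
    (Finset.aemeasurable_fun_sum _ fun t _ => (hD t).aemeasurable) (ae_of_all _ fun ω => ?_)
  refine abs_le.1 ((abs_sum_le_sum_abs _ _).trans ?_)
  simpa using sum_le_sum fun t (_ : t ∈ range n) => hDb t ω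

lemma mgf_sum_range_le [IsProbabilityMeasure μ] (hb : 0 < b) (hε : 0 ≤ ε)
    (hD : ∀ t, StronglyMeasurable[ℱ (t + 1)] (D t)) (hDb : ∀ t ω, |D t ω| ≤ b) {n : ℕ}
    (hDε : ∀ t < n, μ[D t|ℱ t] ≤ᵐ[μ] fun _ => ε) {s : ℝ} (hs : 0 ≤ s) :
    mgf (fun ω => ∑ t ∈ range n, D t ω) μ s ≤ exp (n * (s * ε + s ^ 2 * b ^ 2 / 2)) := by
  have hDm t : AEStronglyMeasurable (D t) μ := ((hD t).mono (ℱ.le _)).aestronglyMeasurable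
  induction n with
  | zero => simp
  | succ n ih =>
    have hSm : StronglyMeasurable[ℱ n] fun ω => exp (s * ∑ t ∈ range n, D t ω) :=
      continuous_exp.comp_stronglyMeasurable ((Finset.stronglyMeasurable_fun_sum _
        fun t ht => (hD t).mono (ℱ.mono (mem_range.1 ht))).const_mul s)
    have hstep := integral_mul_le_of_condExp_le (ℱ.le n) hSm (fun ω => (exp_pos _).le)
      (integrable_exp_mul_sum_range hDm hDb n s)
      (integrable_exp_mul_of_mem_Icc (hDm n).aemeasurable
        (ae_of_all _ fun ω => abs_le.1 (hDb n ω)))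
      (by simpa only [Pi.mul_def, sum_range_succ, mul_add, exp_add] using
        integrable_exp_mul_sum_range hDm hDb (n + 1) s)
      (condExp_exp_mul_le (ℱ.le n) hs hb hε (hDm n) (hDb n) (hDε n n.lt_add_one))
    calc mgf (fun ω => ∑ t ∈ range (n + 1), D t ω) μ s
        = ∫ ω, exp (s * ∑ t ∈ range n, D t ω) * exp (s * D n ω) ∂μ := by
          simp only [mgf, sum_range_succ, mul_add, exp_add]
      _ ≤ exp (s * ε + s ^ 2 * b ^ 2 / 2) * mgf (fun ω => ∑ t ∈ range n, D t ω) μ s := hstep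
      _ ≤ exp (s * ε + s ^ 2 * b ^ 2 / 2) * exp (n * (s * ε + s ^ 2 * b ^ 2 / 2)) := by
          gcongr
          exact ih fun t ht => hDε t (ht.trans n.lt_add_one)
      _ = exp ((n + 1 : ℕ) * (s * ε + s ^ 2 * b ^ 2 / 2)) := by
          rw [← exp_add]; push_cast; ring_nf

/-- **Azuma–Hoeffding inequality** with drift. -/
theorem measure_sum_range_ge_le [IsProbabilityMeasure μ] (hb : 0 < b) (hε : 0 ≤ ε)
    (hD : ∀ t, StronglyMeasurable[ℱ (t + 1)] (D t)) (hDb : ∀ t ω, |D t ω| ≤ b) {n : ℕ}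
    (hDε : ∀ t < n, μ[D t|ℱ t] ≤ᵐ[μ] fun _ => ε) {l : ℝ} (hl : 0 ≤ l) :
    μ.real {ω | n * ε + l ≤ ∑ t ∈ range n, D t ω} ≤ exp (-l ^ 2 / (2 * n * b ^ 2)) := by
  set s := l / (n * b ^ 2)
  have hs : 0 ≤ s := by positivity
  calc μ.real {ω | n * ε + l ≤ ∑ t ∈ range n, D t ω}
      ≤ exp (-s * (n * ε + l)) * mgf (fun ω => ∑ t ∈ range n, D t ω) μ s :=
        measure_ge_le_exp_mul_mgf _ hs (integrable_exp_mul_sum_range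
          (fun t => ((hD t).mono (ℱ.le _)).aestronglyMeasurable) hDb n s)
    _ ≤ exp (-s * (n * ε + l)) * exp (n * (s * ε + s ^ 2 * b ^ 2 / 2)) := by
        gcongr
        exact mgf_sum_range_le hb hε hD hDb hDε hs
    _ = exp (-l ^ 2 / (2 * n * b ^ 2)) := by
        rw [← exp_add]
        congr 1
        rcases n.eq_zero_or_pos with rfl | hn
        · simp [s]
        · simp only [s]
          field_simp
          ring

lemma measure_mul_sqrt_lt_sum_range_le [IsProbabilityMeasure μ] (hb : 0 < b) (hε : 0 ≤ ε)
    (hD : ∀ t, StronglyMeasurable[ℱ (t + 1)] (D t)) (hDb : ∀ t ω, |D t ω| ≤ b) {n : ℕ}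
    (hn : 0 < n) (hDε : ∀ t < n, μ[D t|ℱ t] ≤ᵐ[μ] fun _ => ε) {Z : ℝ} (hZ : 2 * √n * ε ≤ Z) :
    μ {ω | Z * √n < ∑ t ∈ range n, D t ω} ≤ ENNReal.ofReal (exp (-(Z ^ 2 / (8 * b ^ 2)))) := by
  have hn' : (0 : ℝ) < n := by exact_mod_cast hn
  have hZ0 : 0 ≤ Z := (by positivity : 0 ≤ 2 * √n * ε).trans hZ
  have hdrift : n * ε + Z * √n / 2 ≤ Z * √n := by
    nlinarith [mul_self_sqrt hn'.le, sqrt_nonneg n]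
  calc μ {ω | Z * √n < ∑ t ∈ range n, D t ω}
      ≤ μ {ω | n * ε + Z * √n / 2 ≤ ∑ t ∈ range n, D t ω} :=
        measure_mono fun ω hω => hdrift.trans hω.le
    _ = ENNReal.ofReal (μ.real {ω | n * ε + Z * √n / 2 ≤ ∑ t ∈ range n, D t ω}) :=
        (ofReal_measureReal).symm
    _ ≤ ENNReal.ofReal (exp (-(Z * √n / 2) ^ 2 / (2 * n * b ^ 2))) :=
        ENNReal.ofReal_le_ofReal (measure_sum_range_ge_le hb hε hD hDb hDε (by positivity))
    _ = ENNReal.ofReal (exp (-(Z ^ 2 / (8 * b ^ 2)))) := by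
        rw [div_pow, mul_pow, sq_sqrt hn'.le]
        field_simp
        ring_nf

end Azuma

lemma stronglyMeasurable_of_succ_eq_add {Ω : Type*} {m₀ : MeasurableSpace Ω}
    {ℱ : Filtration ℕ m₀} {Y X : ℕ → Ω → ℝ} (hY0 : ∀ ω, Y 0 ω = 0)
    (hYsucc : ∀ t ω, Y (t + 1) ω = Y t ω + X t ω) (hX : ∀ t, StronglyMeasurable[ℱ (t + 1)] (X t))
    (t : ℕ) : StronglyMeasurable[ℱ t] (Y t) := by
  induction t with
  | zero => exact (funext hY0 : Y 0 = fun _ => 0) ▸ stronglyMeasurable_const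
  | succ t ih =>
    exact (funext (hYsucc t) : Y (t + 1) = _) ▸ (ih.mono (ℱ.mono t.le_succ)).add (hX t)

section Envelope

variable {Ω I : Type*} (Y : ℕ → I → Ω → ℝ) (c : ℕ → ℝ)

def belowEnvelope (t : ℕ) : Set Ω := {ω | ∀ s ≤ t, ∀ j, Y s j ω ≤ c s}

noncomputable def truncatedSum (X : ℕ → I → Ω → ℝ) (t : ℕ) (i : I) (ω : Ω) : ℝ :=
  ∑ s ∈ range t, (belowEnvelope Y c s).indicator (X s i) ω

variable {Y c}

lemma mem_belowEnvelope_zero {ω : Ω} : ω ∈ belowEnvelope Y c 0 ↔ ∀ j, Y 0 j ω ≤ c 0 := by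
  simp [belowEnvelope]

lemma mem_belowEnvelope_succ {t : ℕ} {ω : Ω} :
    ω ∈ belowEnvelope Y c (t + 1) ↔ ω ∈ belowEnvelope Y c t ∧ ∀ j, Y (t + 1) j ω ≤ c (t + 1) := by
  simp only [belowEnvelope, Set.mem_ofPred_eq, Nat.le_succ_iff, or_imp, forall_and, forall_eq]

lemma truncatedSum_succ (X : ℕ → I → Ω → ℝ) (t : ℕ) (i : I) (ω : Ω) :
    truncatedSum Y c X (t + 1) i ω
      = truncatedSum Y c X t i ω + (belowEnvelope Y c t).indicator (X t i) ω :=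
  sum_range_succ _ _

lemma mem_belowEnvelope_and_truncatedSum_eq {X : ℕ → I → Ω → ℝ} (hY0 : ∀ i ω, Y 0 i ω = 0)
    (hYsucc : ∀ t i ω, Y (t + 1) i ω = Y t i ω + X t i ω) {t : ℕ} {ω : Ω}
    (hω : ω ∈ belowEnvelope (truncatedSum Y c X) c t) :
    ω ∈ belowEnvelope Y c t ∧ ∀ i, truncatedSum Y c X t i ω = Y t i ω := by
  induction t with
  | zero =>
    have heq i : truncatedSum Y c X 0 i ω = Y 0 i ω := by simp [truncatedSum, hY0]
    refine ⟨mem_belowEnvelope_zero.2 fun j => ?_, heq⟩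
    exact heq j ▸ mem_belowEnvelope_zero.1 hω j
  | succ t ih =>
    obtain ⟨hωt, hbound⟩ := mem_belowEnvelope_succ.1 hω
    obtain ⟨hmem, heq⟩ := ih hωt
    have heq' i : truncatedSum Y c X (t + 1) i ω = Y (t + 1) i ω := by
      rw [truncatedSum_succ, heq, Set.indicator_of_mem hmem, hYsucc]
    exact ⟨mem_belowEnvelope_succ.2 ⟨hmem, fun j => heq' j ▸ hbound j⟩, heq'⟩

lemma compl_belowEnvelope_subset (h0 : ∀ j ω, Y 0 j ω ≤ c 0) (k : ℕ) :
    (belowEnvelope Y c k)ᶜ ⊆ ⋃ t ∈ range k, ⋃ j, {ω | c (t + 1) < Y (t + 1) j ω} := by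
  intro ω hω
  simp only [belowEnvelope, Set.mem_compl_iff, Set.mem_ofPred_eq, not_forall, not_le] at hω
  obtain ⟨s, hsk, j, hj⟩ := hω
  obtain ⟨t, rfl⟩ : ∃ t, s = t + 1 :=
    Nat.exists_eq_succ_of_ne_zero fun hs => (hs ▸ hj).not_ge (h0 j ω)
  simp only [Set.mem_iUnion, mem_range]
  exact ⟨t, hsk, j, hj⟩

lemma measure_compl_belowEnvelope_le [Fintype I] [MeasurableSpace Ω] {μ : Measure Ω}
    (h0 : ∀ j ω, Y 0 j ω ≤ c 0) {k : ℕ} {q : ENNReal}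
    (hq : ∀ t < k, ∀ j, μ {ω | c (t + 1) < Y (t + 1) j ω} ≤ q) :
    μ (belowEnvelope Y c k)ᶜ ≤ k * Fintype.card I * q := by
  calc μ (belowEnvelope Y c k)ᶜ
      ≤ μ (⋃ t ∈ range k, ⋃ j, {ω | c (t + 1) < Y (t + 1) j ω}) :=
        measure_mono (compl_belowEnvelope_subset h0 k)
    _ ≤ ∑ t ∈ range k, ∑ j, μ {ω | c (t + 1) < Y (t + 1) j ω} :=
        (measure_biUnion_finset_le _ _).trans (sum_le_sum fun t _ => measure_iUnion_fintype_le _ _)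
    _ ≤ ∑ t ∈ range k, ∑ j : I, q :=
        sum_le_sum fun t ht => sum_le_sum fun j _ => hq t (mem_range.1 ht) j
    _ = k * Fintype.card I * q := by simp [mul_assoc]

lemma measurableSet_belowEnvelope [Countable I] {m₀ : MeasurableSpace Ω} {ℱ : Filtration ℕ m₀}
    (hY : ∀ t i, StronglyMeasurable[ℱ t] (Y t i)) (t : ℕ) :
    MeasurableSet[ℱ t] (belowEnvelope Y c t) := by
  have hinter : belowEnvelope Y c t = ⋂ s ∈ Set.Iic t, ⋂ j, {ω | Y s j ω ≤ c s} := by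
    ext ω
    simp [belowEnvelope]
  rw [hinter]
  exact .biInter (Set.to_countable _) fun s hs => .iInter fun j =>
    ((hY s j).mono (ℱ.mono hs)).measurable measurableSet_Iic

end Envelope

lemma ofReal_one_sub_le_of_measure_compl_le {Ω : Type*} {m₀ : MeasurableSpace Ω} {μ : Measure Ω}
    [IsProbabilityMeasure μ] {s : Set Ω} {δ : ℝ} (hδ : 0 ≤ δ) (h : μ sᶜ ≤ ENNReal.ofReal δ) :
    ENNReal.ofReal (1 - δ) ≤ μ s := by
  rw [ENNReal.ofReal_sub _ hδ, ENNReal.ofReal_one, tsub_le_iff_right]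
  calc 1 = μ Set.univ := measure_univ.symm
    _ ≤ μ s + μ sᶜ := measure_univ_le_add_compl s
    _ ≤ μ s + ENNReal.ofReal δ := by gcongr

lemma measure_mul_sqrt_lt_truncatedSum_le {Ω I : Type*} [Countable I] {m₀ : MeasurableSpace Ω}
    {μ : Measure Ω} [IsProbabilityMeasure μ] {ℱ : Filtration ℕ m₀} {X Y : ℕ → I → Ω → ℝ}
    {b Z ε : ℝ} {k : ℕ} (hb : 0 < b) (hε : 0 ≤ ε) (hZ : 2 * √k * ε ≤ Z)
    (hXb : ∀ t i ω, |X t i ω| ≤ b) (hX : ∀ t i, StronglyMeasurable[ℱ (t + 1)] (X t i))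
    (hY : ∀ t i, StronglyMeasurable[ℱ t] (Y t i))
    (hcond : ∀ i, ∀ t < k, ∀ᵐ ω ∂μ, (∀ j, Y t j ω ≤ Z * √t) → μ[X t i|ℱ t] ω ≤ ε)
    {t : ℕ} (ht : t < k) (i : I) :
    μ {ω | Z * √(t + 1 : ℕ) < truncatedSum Y (fun s => Z * √s) X (t + 1) i ω}
      ≤ ENNReal.ofReal (Real.exp (-(Z ^ 2 / (8 * b ^ 2)))) := by
  have hG := measurableSet_belowEnvelope (c := fun s => Z * √s) hY
  refine measure_mul_sqrt_lt_sum_range_le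
    (D := fun s => (belowEnvelope Y (fun s => Z * √s) s).indicator (X s i)) hb hε
    (fun s => (hX s i).indicator (ℱ.mono s.le_succ _ (hG s))) (fun s ω => ?_) t.succ_pos
    (fun s hs => ?_) (hZ.trans' ?_)
  · simpa only [Real.norm_eq_abs] using (norm_indicator_le_norm_self (X s i) ω).trans (hXb s i ω)
  · refine condExp_indicator_le (.of_bound ((hX s i).mono (ℱ.le _)).aestronglyMeasurable b
      (ae_of_all _ (hXb s i))) (hG s) hε ?_
    filter_upwards [hcond i s (by omega)] with ω h hω using h fun j => hω s le_rfl j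
  · gcongr
    exact_mod_cast ht

theorem generalized_azuma_general {Ω : Type*} {m : MeasurableSpace Ω}
    (P : Measure Ω) [IsProbabilityMeasure P]
    (ℱ : Filtration ℕ m)
    {I : Type*} [Fintype I]
    (k : ℕ) (δ b Z ε : ℝ)
    (hδ0 : 0 < δ) (hb : 0 < b) (hε : 0 < ε)
    (hZ : 2 * max (Real.sqrt k * ε)
        (2 * b * Real.sqrt (Real.log (k * Fintype.card I / δ))) ≤ Z)
    (X : ℕ → I → Ω → ℝ)
    (hXb : ∀ t i ω, |X t i ω| ≤ b)
    (hXmeas : ∀ t i, StronglyMeasurable[ℱ (t + 1)] (X t i))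
    (Y : ℕ → I → Ω → ℝ)
    (hY0 : ∀ i ω, Y 0 i ω = 0)
    (hYsucc : ∀ t i ω, Y (t + 1) i ω = Y t i ω + X t i ω)
    (hcond : ∀ i, ∀ t < k, ∀ᵐ ω ∂P,
      (∀ j, Y t j ω ≤ Z * Real.sqrt t) → (P[X t i|ℱ t]) ω ≤ ε) :
    ENNReal.ofReal (1 - δ)
      ≤ P {ω | ∀ t ≤ k, ∀ i, Y t i ω ≤ Z * Real.sqrt t} := by
  set c : ℕ → ℝ := fun t => Z * √t
  have hY t i : StronglyMeasurable[ℱ t] (Y t i) :=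
    stronglyMeasurable_of_succ_eq_add (Y := fun t => Y t i) (hY0 i) (fun t => hYsucc t i)
      (fun t => hXmeas t i) t
  set L := Real.log (k * Fintype.card I / δ)
  have hZε : 2 * √k * ε ≤ Z := by linarith [le_max_left (√k * ε) (2 * b * √L)]
  have hZL : 4 * b * √L ≤ Z := by linarith [le_max_right (√k * ε) (2 * b * √L)]
  have hbad : P (belowEnvelope (truncatedSum Y c X) c k)ᶜ ≤ ENNReal.ofReal δ := by
    have htail t (ht : t < k) i :=
      measure_mul_sqrt_lt_truncatedSum_le hb hε.le hZε hXb hXmeas hY hcond ht i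
    refine (measure_compl_belowEnvelope_le (fun j ω => by simp [truncatedSum, c]) htail).trans ?_
    rw [← ENNReal.ofReal_natCast, ← ENNReal.ofReal_natCast (Fintype.card I),
      ← ENNReal.ofReal_mul (by positivity), ← ENNReal.ofReal_mul (by positivity)]
    exact ENNReal.ofReal_le_ofReal (Real.mul_exp_neg_le_of_sqrt_log_le (by positivity) hδ0 hb hZL)
  exact (ofReal_one_sub_le_of_measure_compl_le hδ0.le hbad).trans
    (measure_mono fun ω hω => (mem_belowEnvelope_and_truncatedSum_eq hY0 hYsucc hω).1)

/-- generalized Azuma inequality for conditionally constrained increments: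
if the conditional expectation of each bounded increment is at most `ε` on the event
that all running sums have stayed below the envelope `Z √t`, and
`Z ≥ 2 max(√k ε, 2b √(log(k|I|/δ)))`, then with probability at least `1 - δ` all the
sums `Y_{t,i}` stay below `Z √t` for all `t ≤ k` and `i ∈ I`. -/
theorem generalized_azuma {Ω : Type*} {m : MeasurableSpace Ω}
    (P : Measure Ω) [IsProbabilityMeasure P]
    (ℱ : Filtration ℕ m) (hF0 : ℱ 0 = ⊥)
    {I : Type*} [Fintype I] [Nonempty I]
    (k : ℕ) (hk : 1 ≤ k) (δ b Z ε : ℝ)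
    (hδ0 : 0 < δ) (hδ1 : δ < 1) (hb : 0 < b) (hε : 0 < ε)
    (hZ : 2 * max (Real.sqrt k * ε)
        (2 * b * Real.sqrt (Real.log (k * Fintype.card I / δ))) ≤ Z)
    (X : ℕ → I → Ω → ℝ)
    (hXb : ∀ t i ω, |X t i ω| ≤ b)
    (hXmeas : ∀ t i, StronglyMeasurable[ℱ (t + 1)] (X t i))
    (Y : ℕ → I → Ω → ℝ)
    (hY0 : ∀ i ω, Y 0 i ω = 0)
    (hYsucc : ∀ t i ω, Y (t + 1) i ω = Y t i ω + X t i ω)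
    (hcond : ∀ i, ∀ t < k, ∀ᵐ ω ∂P,
      (∀ j, Y t j ω ≤ Z * Real.sqrt t) → (P[X t i|ℱ t]) ω ≤ ε) :
    ENNReal.ofReal (1 - δ)
      ≤ P {ω | ∀ t ≤ k, ∀ i, Y t i ω ≤ Z * Real.sqrt t} :=
  generalized_azuma_general P ℱ k δ b Z ε hδ0 hb hε hZ X hXb hXmeas Y hY0 hYsucc hcond
end

section
/- Consider the proximal problem $\min_{x \in \Delta_n} \langle q, x \rangle - \sum_{a=1}^n x_a^p$ for $p \in (0,1)$ and $q \in \mathbb{R}^n$. Define $\phi(\mu) = \sum_{a=1}^n \left(\frac{p}{q_a - \mu}\right)^{1/(1-p)} - 1$, $l = \min_a q_a - p\, n^{1-p}$, and $h = \min_a q_a - p$. Then $\phi$ is strictly increasing on $[l, h]$ and has a unique root $\mu^* \in [l, h]$; moreover the unique minimizer $x^*$ of the proximal problem lies in the relative interior of $\Delta_n$ and satisfies $x^*_a = \left(\frac{q_a - \mu^*}{p}\right)^{1/(p-1)}$ for every $a$. -/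
/-!
A point `x` of the simplex with all `x_a > 0` and `p x_a ^ (p - 1) = q_a - μ` (the KKT conditions)
is the unique minimizer: summing the strict tangent-line inequalities of the concave map
`t ↦ t ^ p` at `x_a` bounds the objective at any other point strictly from below by its value
at `x`, because the multiplier term `μ ∑ (y_a - x_a)` vanishes. Solving the KKT conditions for
`x_a` turns `∑ x_a = 1` into `φ μ = 0`, and `φ` is continuous and strictly increasing below
`min q` with `φ l ≤ 0 ≤ φ h`, so the intermediate value theorem provides `μ*`.
-/

open Finset

theorem Real.rpow_lt_rpow_add_mul_sub {p x y : ℝ} (hp0 : 0 < p) (hp1 : p < 1) (hx : 0 < x)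
    (hy : 0 ≤ y) (hyx : y ≠ x) : y ^ p < x ^ p + p * x ^ (p - 1) * (y - x) := by
  have hs : -1 ≤ y / x - 1 := by linarith [div_nonneg hy hx.le]
  have hs' : y / x - 1 ≠ 0 := sub_ne_zero.2 fun h => hyx ((div_eq_one_iff_eq hx.ne').1 h)
  have bernoulli := rpow_one_add_lt_one_add_mul_self hs hs' hp0 hp1
  rw [add_sub_cancel, Real.div_rpow hy hx.le, div_lt_iff₀ (Real.rpow_pos_of_pos hx p)]
    at bernoulli
  calc y ^ p < (1 + p * (y / x - 1)) * x ^ p := bernoulli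
    _ = x ^ p + p * x ^ (p - 1) * (y - x) := by
      rw [Real.rpow_sub_one hx.ne']; field_simp

theorem Real.div_rpow_one_div_one_sub (a b p : ℝ) :
    (a / b) ^ (1 / (1 - p)) = (b / a) ^ (1 / (p - 1)) := by
  rw [← neg_sub p 1, div_neg, Real.rpow_neg_eq_inv_rpow, inv_div]

theorem Real.mul_rpow_div_rpow_one_div_sub_one {p d : ℝ} (hp0 : 0 < p) (hp1 : p ≠ 1)
    (hd : 0 ≤ d) : p * ((d / p) ^ (1 / (p - 1))) ^ (p - 1) = d := by
  rw [← Real.rpow_mul (div_nonneg hd hp0.le), one_div_mul_cancel (sub_ne_zero.2 hp1),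
    Real.rpow_one, mul_div_cancel₀ _ hp0.ne']

section Simplex

variable {ι : Type*} [Fintype ι]

theorem sum_mul_sub_sum_rpow_lt_of_ne {p μ : ℝ} (hp0 : 0 < p) (hp1 : p < 1) {q x y : ι → ℝ}
    (hx : ∀ a, 0 < x a) (hkkt : ∀ a, p * x a ^ (p - 1) = q a - μ) (hy : ∀ a, 0 ≤ y a)
    (hsum : ∑ a, y a = ∑ a, x a) (hyx : y ≠ x) :
    (∑ a, q a * x a) - (∑ a, x a ^ p) < (∑ a, q a * y a) - ∑ a, y a ^ p := by
  have htangent : ∀ a, y a ^ p ≤ x a ^ p + (q a - μ) * (y a - x a) := by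
    intro a
    rw [← hkkt a]
    rcases eq_or_ne (y a) (x a) with h | h
    · simp [h]
    · exact (Real.rpow_lt_rpow_add_mul_sub hp0 hp1 (hx a) (hy a) h).le
  obtain ⟨b, hb⟩ := Function.ne_iff.1 hyx
  have hlt := Finset.sum_lt_sum (fun a _ => htangent a) ⟨b, mem_univ b, by
    rw [← hkkt b]; exact Real.rpow_lt_rpow_add_mul_sub hp0 hp1 (hx b) (hy b) hb⟩
  simp only [sum_add_distrib, mul_sub, sub_mul, sum_sub_distrib, ← mul_sum, hsum] at hlt
  linarith

theorem sum_mul_sub_sum_rpow_le {p μ : ℝ} (hp0 : 0 < p) (hp1 : p < 1) {q x y : ι → ℝ}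
    (hx : ∀ a, 0 < x a) (hkkt : ∀ a, p * x a ^ (p - 1) = q a - μ) (hy : ∀ a, 0 ≤ y a)
    (hsum : ∑ a, y a = ∑ a, x a) :
    (∑ a, q a * x a) - (∑ a, x a ^ p) ≤ (∑ a, q a * y a) - ∑ a, y a ^ p := by
  rcases eq_or_ne y x with rfl | hyx
  · exact le_rfl
  · exact (sum_mul_sub_sum_rpow_lt_of_ne hp0 hp1 hx hkkt hy hsum hyx).le

theorem strictMonoOn_sum_rpow_div_sub [Nonempty ι] {p r : ℝ} (hp : 0 < p) (hr : 0 < r)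
    (q : ι → ℝ) :
    StrictMonoOn (fun μ => ∑ a, (p / (q a - μ)) ^ r) (Set.Iio (⨅ a, q a)) := by
  intro μ hμ ν hν hμν
  refine sum_lt_sum_of_nonempty univ_nonempty fun a _ => ?_
  have hνa : ν < q a := lt_of_lt_of_le hν (ciInf_le (Finite.bddBelow_range q) a)
  exact Real.rpow_lt_rpow (div_nonneg hp.le (by linarith))
    (div_lt_div_of_pos_left hp (by linarith) (by linarith)) hr

theorem continuousOn_sum_rpow_div_sub {p : ℝ} (hp : p ≠ 0) (r : ℝ) (q : ι → ℝ) :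
    ContinuousOn (fun μ => ∑ a, (p / (q a - μ)) ^ r) (Set.Iio (⨅ a, q a)) := by
  refine continuousOn_finsetSum _ fun a _ => ?_
  refine (continuousOn_const.div (continuousOn_const.sub continuousOn_id) ?_).rpow_const ?_
  all_goals
    intro μ hμ
    have hμa : μ < q a := lt_of_lt_of_le hμ (ciInf_le (Finite.bddBelow_range q) a)
  · exact (sub_pos.2 hμa).ne'
  · exact Or.inl (div_ne_zero hp (sub_pos.2 hμa).ne')

theorem one_le_sum_rpow_div_sub [Nonempty ι] {p : ℝ} (hp : 0 < p) (r : ℝ) (q : ι → ℝ) :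
    1 ≤ ∑ a, (p / (q a - ((⨅ a, q a) - p))) ^ r := by
  obtain ⟨a₀, ha₀⟩ := exists_eq_ciInf_of_finite (f := q)
  calc (1 : ℝ) = (p / (q a₀ - ((⨅ a, q a) - p))) ^ r := by
        rw [ha₀, sub_sub_cancel, div_self hp.ne', Real.one_rpow]
    _ ≤ ∑ a, (p / (q a - ((⨅ a, q a) - p))) ^ r := by
        refine single_le_sum (f := fun a => (p / (q a - ((⨅ a, q a) - p))) ^ r)
          (fun a _ => Real.rpow_nonneg (div_nonneg hp.le ?_) r) (mem_univ a₀)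
        linarith [ciInf_le (Finite.bddBelow_range q) a]

theorem sum_rpow_div_sub_le_one [Nonempty ι] {p μ : ℝ} (hp0 : 0 < p) (hp1 : p < 1)
    (q : ι → ℝ) (hμ : μ ≤ (⨅ a, q a) - p * (Fintype.card ι : ℝ) ^ (1 - p)) :
    ∑ a, (p / (q a - μ)) ^ (1 / (1 - p)) ≤ 1 := by
  set n : ℝ := (Fintype.card ι : ℝ)
  have hn : 0 < n := Nat.cast_pos.2 Fintype.card_pos
  have hpn : 0 < p * n ^ (1 - p) := by positivity
  have hr : 0 ≤ 1 / (1 - p) := by rw [one_div_nonneg]; linarith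
  have hterm : ∀ a, (p / (q a - μ)) ^ (1 / (1 - p)) ≤ n⁻¹ := by
    intro a
    have hd : p * n ^ (1 - p) ≤ q a - μ := by linarith [ciInf_le (Finite.bddBelow_range q) a]
    calc (p / (q a - μ)) ^ (1 / (1 - p)) ≤ (p / (p * n ^ (1 - p))) ^ (1 / (1 - p)) :=
          Real.rpow_le_rpow (div_nonneg hp0.le (hpn.trans_le hd).le)
            (div_le_div_of_nonneg_left hp0.le hpn hd) hr
      _ = n⁻¹ := by
          rw [div_mul_cancel_left₀ hp0.ne', ← Real.rpow_neg hn.le, ← Real.rpow_mul hn.le,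
            show -(1 - p) * (1 / (1 - p)) = -1 by field_simp [(sub_pos.2 hp1).ne'],
            Real.rpow_neg_one]
  calc ∑ a, (p / (q a - μ)) ^ (1 / (1 - p)) ≤ ∑ _a : ι, n⁻¹ := sum_le_sum fun a _ => hterm a
    _ = 1 := by rw [sum_const, card_univ, nsmul_eq_mul, mul_inv_cancel₀ hn.ne']

end Simplex

/-- characterization of the Tsallis proximal subproblem
`min_{x ∈ Δ} ⟨q, x⟩ - ∑ x_a^p`: the dual function
`φ(μ) = ∑ (p/(q_a - μ))^(1/(1-p)) - 1` is strictly increasing on `[l, h]` with a unique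
root `μ*` there, and every minimizer `x*` lies in the relative interior of the simplex
and satisfies `x*_a = ((q_a - μ*)/p)^(1/(p-1))`. -/
theorem tsallis_prox_characterization {ι : Type*} [Fintype ι] [Nonempty ι]
    (p : ℝ) (hp0 : 0 < p) (hp1 : p < 1) (q : ι → ℝ)
    (φ : ℝ → ℝ)
    (hφ : ∀ μ, φ μ = (∑ a, (p / (q a - μ)) ^ ((1 : ℝ) / (1 - p))) - 1)
    (l h : ℝ)
    (hl : l = (⨅ a, q a) - p * (Fintype.card ι : ℝ) ^ ((1 : ℝ) - p))
    (hh : h = (⨅ a, q a) - p) :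
    StrictMonoOn φ (Set.Icc l h) ∧
    ∃ μs ∈ Set.Icc l h, φ μs = 0 ∧
      (∀ μ ∈ Set.Icc l h, φ μ = 0 → μ = μs) ∧
      (∃ x : ι → ℝ, (∀ a, 0 ≤ x a) ∧ (∑ a, x a = 1) ∧
        ∀ y : ι → ℝ, (∀ a, 0 ≤ y a) → (∑ a, y a = 1) →
          (∑ a, q a * x a) - (∑ a, x a ^ p) ≤ (∑ a, q a * y a) - ∑ a, y a ^ p) ∧
      ∀ x : ι → ℝ, (∀ a, 0 ≤ x a) → (∑ a, x a = 1) →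
        (∀ y : ι → ℝ, (∀ a, 0 ≤ y a) → (∑ a, y a = 1) →
          (∑ a, q a * x a) - (∑ a, x a ^ p) ≤ (∑ a, q a * y a) - ∑ a, y a ^ p) →
        ∀ a, 0 < x a ∧ x a = ((q a - μs) / p) ^ ((1 : ℝ) / (p - 1)) := by
  have hr : 0 < (1 : ℝ) / (1 - p) := one_div_pos.2 (sub_pos.2 hp1)
  have hIcc : Set.Icc l h ⊆ Set.Iio (⨅ a, q a) := fun μ hμ => show μ < _ by linarith [hμ.2]
  have hmono : StrictMonoOn φ (Set.Icc l h) := fun μ hμ ν hν hμν => by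
    rw [hφ, hφ]; linarith [strictMonoOn_sum_rpow_div_sub hp0 hr q (hIcc hμ) (hIcc hν) hμν]
  have hcont : ContinuousOn φ (Set.Icc l h) :=
    (((continuousOn_sum_rpow_div_sub hp0.ne' _ q).mono hIcc).sub continuousOn_const).congr
      fun μ _ => hφ μ
  have hlh : l ≤ h := by
    have : 1 ≤ (Fintype.card ι : ℝ) ^ (1 - p) :=
      Real.one_le_rpow (Nat.one_le_cast.2 Fintype.card_pos) (sub_pos.2 hp1).le
    rw [hl, hh]; nlinarith
  have hφl : φ l ≤ 0 := by rw [hφ]; linarith [sum_rpow_div_sub_le_one hp0 hp1 q hl.le]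
  have hφh : 0 ≤ φ h := by rw [hφ, hh]; linarith [one_le_sum_rpow_div_sub hp0 (1 / (1 - p)) q]
  obtain ⟨μs, hμs, hroot⟩ := intermediate_value_Icc hlh hcont ⟨hφl, hφh⟩
  set x : ι → ℝ := fun a => ((q a - μs) / p) ^ ((1 : ℝ) / (p - 1))
  have hgap : ∀ a, 0 < q a - μs := fun a =>
    sub_pos.2 ((hIcc hμs).trans_le (ciInf_le (Finite.bddBelow_range q) a))
  have hxpos : ∀ a, 0 < x a := fun a => Real.rpow_pos_of_pos (div_pos (hgap a) hp0) _
  have hkkt : ∀ a, p * x a ^ (p - 1) = q a - μs := fun a =>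
    Real.mul_rpow_div_rpow_one_div_sub_one hp0 hp1.ne (hgap a).le
  have hxsum : ∑ a, x a = 1 := by
    rw [hφ, sub_eq_zero] at hroot
    simpa only [Real.div_rpow_one_div_one_sub] using hroot
  refine ⟨hmono, μs, hμs, hroot, fun μ hμ hμ0 => hmono.injOn hμ hμs (hμ0.trans hroot.symm),
    ⟨x, fun a => (hxpos a).le, hxsum, fun y hy hysum =>
      sum_mul_sub_sum_rpow_le hp0 hp1 hxpos hkkt hy (hysum.trans hxsum.symm)⟩,
    fun y hy hysum hymin => ?_⟩
  obtain rfl : y = x := by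
    by_contra hyx
    exact (hymin x (fun a => (hxpos a).le) hxsum).not_gt
      (sum_mul_sub_sum_rpow_lt_of_ne hp0 hp1 hxpos hkkt hy (hysum.trans hxsum.symm) hyx)
  exact fun a => ⟨hxpos a, rfl⟩
end
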